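/- arXiv:1208.1977 — 4 statements merged into one kernel-verified Lean document; each statement's English description precedes it below -/
import Mathlib

section
/- Let α > 2, a > 0, P̂ > 0, and Z₁, Z₂ > 0. Define S(b) = 1/(Z₁ + 1 + a(P̂ b)^{2/α}) + 1/(Z₂ + 1 + 1/(a(P̂ b)^{2/α})) for b > 0. Then S attains its unique maximum at b_opt = (1/P̂)(Z₁/(a Z₂))^{α/2}. -/
/-!
Writing `t = a (P̂ b)^{2/α}` for the load ratio, `S(b) = g(t)` with
`g(t) = 1/(Z₁ + 1 + t) + 1/(Z₂ + 1 + 1/t)`, and `g(Z₁/Z₂) - g(t)` is `(Z₂ t - Z₁)²` divided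
by a positive quantity, so `g` has its unique maximum on `t > 0` at `t = Z₁/Z₂`. Since
`b ↦ a (P̂ b)^{2/α}` is injective on `b > 0` and sends `b_opt` to `Z₁/Z₂`, the theorem follows.
-/

open Real Set

noncomputable def sirCoverage (Z₁ Z₂ t : ℝ) : ℝ :=
  1 / (Z₁ + 1 + t) + 1 / (Z₂ + 1 + 1 / t)

section

variable {Z₁ Z₂ t : ℝ}

theorem sirCoverage_sub_eq (hZ₁ : 0 < Z₁) (hZ₂ : 0 < Z₂) (ht : 0 < t) :
    sirCoverage Z₁ Z₂ (Z₁ / Z₂) - sirCoverage Z₁ Z₂ t =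
      (Z₂ * t - Z₁) ^ 2 / ((Z₁ * Z₂ + Z₁ + Z₂) * ((Z₁ + 1 + t) * ((Z₂ + 1) * t + 1))) := by
  unfold sirCoverage
  have : Z₁ + 1 + t ≠ 0 := by positivity
  have : (Z₂ + 1) * t + 1 ≠ 0 := by positivity
  have : Z₁ * Z₂ + Z₁ + Z₂ ≠ 0 := by positivity
  field_simp
  ring

theorem sirCoverage_lt_of_ne (hZ₁ : 0 < Z₁) (hZ₂ : 0 < Z₂) (ht : 0 < t) (hne : t ≠ Z₁ / Z₂) :
    sirCoverage Z₁ Z₂ t < sirCoverage Z₁ Z₂ (Z₁ / Z₂) := by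
  have hsq : Z₂ * t - Z₁ ≠ 0 := by
    rw [sub_ne_zero]
    contrapose! hne
    rw [eq_div_iff hZ₂.ne', mul_comm, hne]
  have hgap := sirCoverage_sub_eq hZ₁ hZ₂ ht
  have : 0 < sirCoverage Z₁ Z₂ (Z₁ / Z₂) - sirCoverage Z₁ Z₂ t := by
    rw [hgap]
    positivity
  linarith

end

theorem injOn_mul_mul_rpow {a P p : ℝ} (ha : a ≠ 0) (hP : 0 < P) (hp : p ≠ 0) :
    InjOn (fun b => a * (P * b) ^ p) (Ioi 0) := by
  intro b hb c hc h
  have hpow : (P * b) ^ p = (P * c) ^ p := mul_left_cancel₀ ha h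
  exact mul_left_cancel₀ hP.ne' <|
    rpow_left_injOn hp (mul_nonneg hP.le (le_of_lt hb)) (mul_nonneg hP.le (le_of_lt hc)) hpow

theorem mul_one_div_mul_rpow_inv_rpow {P x p : ℝ} (hP : P ≠ 0) (hx : 0 ≤ x) (hp : p ≠ 0) :
    (P * (1 / P * x ^ p⁻¹)) ^ p = x := by
  rw [← mul_assoc, mul_one_div_cancel hP, one_mul, rpow_inv_rpow hx hp]

/-- The two-RAT SIR coverage
`S(b) = 1/(Z₁+1+a(P̂b)^{2/α}) + 1/(Z₂+1+1/(a(P̂b)^{2/α}))` attains its unique maximum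
on `(0,∞)` at `b_opt = (1/P̂)(Z₁/(aZ₂))^{α/2}`. -/
theorem optimal_bias_sir_coverage (α a Phat Z₁ Z₂ : ℝ)
    (hα : 2 < α) (ha : 0 < a) (hP : 0 < Phat) (hZ₁ : 0 < Z₁) (hZ₂ : 0 < Z₂)
    (S : ℝ → ℝ)
    (hS : ∀ b : ℝ, 0 < b →
      S b = 1 / (Z₁ + 1 + a * (Phat * b) ^ (2 / α)) +
            1 / (Z₂ + 1 + 1 / (a * (Phat * b) ^ (2 / α)))) :
    let bopt := (1 / Phat) * (Z₁ / (a * Z₂)) ^ (α / 2)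
    0 < bopt ∧ (∀ b : ℝ, 0 < b → b ≠ bopt → S b < S bopt) := by
  intro bopt
  have hexp : (2 / α) ≠ 0 := by positivity
  have hbopt : 0 < bopt := by positivity
  have hload_opt : a * (Phat * bopt) ^ (2 / α) = Z₁ / Z₂ := by
    have := mul_one_div_mul_rpow_inv_rpow hP.ne' (by positivity : 0 ≤ Z₁ / (a * Z₂)) hexp
    rw [inv_div] at this
    rw [this]
    field_simp
  refine ⟨hbopt, fun b hb hne => ?_⟩
  have hSb : S b = sirCoverage Z₁ Z₂ (a * (Phat * b) ^ (2 / α)) := hS b hb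
  have hSopt : S bopt = sirCoverage Z₁ Z₂ (Z₁ / Z₂) := by rw [hS bopt hbopt, hload_opt]; rfl
  rw [hSb, hSopt]
  refine sirCoverage_lt_of_ne hZ₁ hZ₂ (by positivity) fun h => hne ?_
  exact injOn_mul_mul_rpow ha.ne' hP hexp hb hbopt (h.trans hload_opt.symm)
end

section
/- With S(b) and b_opt as above, S(b_opt) = (Z₂ + Z₁)/(Z₂ + Z₁ + Z₁Z₂), where Z₁, Z₂ > 0. In particular S(b_opt) does not depend on the density ratio a or the power ratio P̂. -/
open Real

/-!
Writing `x = a (P̂ b)^{2/α}`, the coverage is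
`S(b) = 1/(Z₁ + 1 + x) + 1/(Z₂ + 1 + 1/x)`. The optimal bias is exactly the one making
`x = Z₁/Z₂`, since `(P̂ b_opt)^{2/α} = ((Z₁/(a Z₂))^{α/2})^{2/α} = Z₁/(a Z₂)`; at that point
both summands have the common denominator `Z₂ + Z₁ + Z₁ Z₂`, and `a`, `P̂` have disappeared.
-/

noncomputable def twoTierCoverage (Z₁ Z₂ x : ℝ) : ℝ :=
  1 / (Z₁ + 1 + x) + 1 / (Z₂ + 1 + 1 / x)

theorem twoTierCoverage_div (Z₁ Z₂ : ℝ) (hZ₁ : 0 < Z₁) (hZ₂ : 0 < Z₂) :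
    twoTierCoverage Z₁ Z₂ (Z₁ / Z₂) = (Z₂ + Z₁) / (Z₂ + Z₁ + Z₁ * Z₂) := by
  unfold twoTierCoverage
  field_simp
  ring

theorem rpow_div_two_rpow_two_div {y : ℝ} (hy : 0 ≤ y) {α : ℝ} (hα : α ≠ 0) :
    (y ^ (α / 2)) ^ (2 / α) = y := by
  rw [← inv_div α 2]
  exact rpow_rpow_inv hy (div_ne_zero hα two_ne_zero)

theorem mul_rpow_optimalBias {α a Phat Z₁ Z₂ : ℝ} (hα : α ≠ 0) (ha : 0 < a) (hP : Phat ≠ 0)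
    (hZ₁ : 0 ≤ Z₁) (hZ₂ : 0 < Z₂) :
    a * (Phat * ((1 / Phat) * (Z₁ / (a * Z₂)) ^ (α / 2))) ^ (2 / α) = Z₁ / Z₂ := by
  rw [← mul_assoc, mul_one_div_cancel hP, one_mul,
    rpow_div_two_rpow_two_div (div_nonneg hZ₁ (mul_pos ha hZ₂).le) hα]
  field_simp

/-- At the optimal bias `b_opt = (1/P̂)(Z₁/(aZ₂))^{α/2}`, the SIR coverage
`S(b) = 1/(Z₁+1+a(P̂b)^{2/α}) + 1/(Z₂+1+1/(a(P̂b)^{2/α}))` equals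
`(Z₂+Z₁)/(Z₂+Z₁+Z₁Z₂)`, independent of `a` and `P̂`. -/
theorem sir_coverage_at_optimal_bias (α a Phat Z₁ Z₂ : ℝ)
    (hα : 2 < α) (ha : 0 < a) (hP : 0 < Phat) (hZ₁ : 0 < Z₁) (hZ₂ : 0 < Z₂) :
    (fun b : ℝ => 1 / (Z₁ + 1 + a * (Phat * b) ^ (2 / α)) +
        1 / (Z₂ + 1 + 1 / (a * (Phat * b) ^ (2 / α))))
      ((1 / Phat) * (Z₁ / (a * Z₂)) ^ (α / 2))
      = (Z₂ + Z₁) / (Z₂ + Z₁ + Z₁ * Z₂) := by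
  change twoTierCoverage Z₁ Z₂ (a * (Phat * ((1 / Phat) * (Z₁ / (a * Z₂)) ^ (α / 2))) ^ (2 / α))
    = _
  rw [mul_rpow_optimalBias (by linarith) ha hP.ne' hZ₁.le hZ₂, twoTierCoverage_div Z₁ Z₂ hZ₁ hZ₂]
end

section
/- With S(b) defined as above, S is strictly quasiconcave on (0,∞): S is strictly increasing on (0, b_opt) and strictly decreasing on (b_opt, ∞). -/
/-!
Write `S(b) = f(T(b))` with `T(b) = a (P̂b)^{2/α}` and
`f(x) = 1/(Z₁+1+x) + 1/(Z₂+1+1/x) = 1/(Z₁+1+x) + x/((Z₂+1)x+1)`.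
Since `2/α > 0`, `T` is strictly increasing, and `b_opt` is chosen so that `T(b_opt) = Z₁/Z₂`.
For `0 < x < y`,
`f(y) - f(x) = (y-x) (1/(((Z₂+1)x+1)((Z₂+1)y+1)) - 1/((Z₁+1+x)(Z₁+1+y)))`,
and `((Z₂+1)x+1) - (Z₁+1+x) = Z₂x - Z₁` is negative below `Z₁/Z₂` and positive above it,
so `f` increases up to `Z₁/Z₂` and decreases after it.
-/

open Real Set

noncomputable def coverageProfile (Z₁ Z₂ x : ℝ) : ℝ :=
  1 / (Z₁ + 1 + x) + 1 / (Z₂ + 1 + 1 / x)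

section coverageProfile

variable {Z₁ Z₂ : ℝ}

theorem coverageProfile_sub_coverageProfile (hZ₁ : 0 ≤ Z₁) (hZ₂ : 0 ≤ Z₂) {x y : ℝ}
    (hx : 0 < x) (hy : 0 < y) :
    coverageProfile Z₁ Z₂ y - coverageProfile Z₁ Z₂ x =
      (y - x) * (1 / (((Z₂ + 1) * x + 1) * ((Z₂ + 1) * y + 1)) -
        1 / ((Z₁ + 1 + x) * (Z₁ + 1 + y))) := by
  unfold coverageProfile
  field_simp
  ring

theorem strictMonoOn_coverageProfile (hZ₁ : 0 ≤ Z₁) (hZ₂ : 0 < Z₂) :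
    StrictMonoOn (coverageProfile Z₁ Z₂) (Ioc 0 (Z₁ / Z₂)) := by
  rintro x ⟨hx, -⟩ y ⟨hy, hy_bound⟩ hxy
  have hy_le : Z₂ * y ≤ Z₁ := (le_div_iff₀' hZ₂).1 hy_bound
  have hx_lt : Z₂ * x < Z₁ := (mul_lt_mul_of_pos_left hxy hZ₂).trans_le hy_le
  rw [← sub_pos, coverageProfile_sub_coverageProfile hZ₁ hZ₂.le hx hy]
  refine mul_pos (sub_pos.2 hxy) (sub_pos.2 (one_div_lt_one_div_of_lt (by positivity) ?_))
  exact mul_lt_mul (by linarith) (by linarith) (by positivity) (by positivity)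

theorem strictAntiOn_coverageProfile (hZ₁ : 0 < Z₁) (hZ₂ : 0 < Z₂) :
    StrictAntiOn (coverageProfile Z₁ Z₂) (Ici (Z₁ / Z₂)) := by
  intro x hx y hy hxy
  have hx_pos : 0 < x := (div_pos hZ₁ hZ₂).trans_le hx
  have hx_ge : Z₁ ≤ Z₂ * x := (div_le_iff₀' hZ₂).1 hx
  have hy_gt : Z₁ < Z₂ * y := hx_ge.trans_lt (mul_lt_mul_of_pos_left hxy hZ₂)
  have hy_pos : 0 < y := hx_pos.trans hxy
  rw [← sub_neg, coverageProfile_sub_coverageProfile hZ₁.le hZ₂.le hx_pos hy_pos]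
  refine mul_neg_of_pos_of_neg (sub_pos.2 hxy)
    (sub_neg.2 (one_div_lt_one_div_of_lt (by positivity) ?_))
  exact mul_lt_mul' (by linarith) (by linarith) (by positivity) (by positivity)

end coverageProfile

theorem strictMonoOn_const_mul_mul_rpow {a c p : ℝ} (ha : 0 < a) (hc : 0 < c) (hp : 0 < p) :
    StrictMonoOn (fun b : ℝ => a * (c * b) ^ p) (Ici 0) := fun _ hx _ _ hxy =>
  mul_lt_mul_of_pos_left
    (rpow_lt_rpow (mul_nonneg hc.le hx) (mul_lt_mul_of_pos_left hxy hc) hp) ha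

/-- `S(b) = 1/(Z₁+1+a(P̂b)^{2/α}) + 1/(Z₂+1+1/(a(P̂b)^{2/α}))` is strictly quasiconcave
on `(0,∞)`: strictly increasing up to `b_opt = (1/P̂)(Z₁/(aZ₂))^{α/2}` and strictly
decreasing afterwards. -/
theorem sir_coverage_quasiconcave (α a Phat Z₁ Z₂ : ℝ)
    (hα : 2 < α) (ha : 0 < a) (hP : 0 < Phat) (hZ₁ : 0 < Z₁) (hZ₂ : 0 < Z₂)
    (S : ℝ → ℝ)
    (hS : ∀ b : ℝ, 0 < b →
      S b = 1 / (Z₁ + 1 + a * (Phat * b) ^ (2 / α)) +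
            1 / (Z₂ + 1 + 1 / (a * (Phat * b) ^ (2 / α)))) :
    let bopt := (1 / Phat) * (Z₁ / (a * Z₂)) ^ (α / 2)
    StrictMonoOn S (Set.Ioc (0 : ℝ) bopt) ∧ StrictAntiOn S (Set.Ici bopt) := by
  intro bopt
  set T : ℝ → ℝ := fun b => a * (Phat * b) ^ (2 / α)
  have hα₀ : 0 < α := by linarith
  have hbopt : 0 < bopt := by positivity
  have hT : StrictMonoOn T (Ici 0) := strictMonoOn_const_mul_mul_rpow ha hP (by positivity)
  have hT_bopt : T bopt = Z₁ / Z₂ := by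
    have : Phat * bopt = (Z₁ / (a * Z₂)) ^ (α / 2) := by simp only [bopt]; field_simp
    simp only [T, this, ← inv_div α 2, rpow_rpow_inv (by positivity : 0 ≤ Z₁ / (a * Z₂))
      (by positivity : α / 2 ≠ 0)]
    field_simp
  have hST : EqOn (coverageProfile Z₁ Z₂ ∘ T) S (Ioi 0) := fun b hb => (hS b hb).symm
  have hT_le : MapsTo T (Ioc 0 bopt) (Ioc 0 (Z₁ / Z₂)) := fun b hb =>
    ⟨mul_pos ha (rpow_pos_of_pos (mul_pos hP hb.1) _),
      hT_bopt ▸ hT.monotoneOn hb.1.le hbopt.le hb.2⟩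
  have hT_ge : MapsTo T (Ici bopt) (Ici (Z₁ / Z₂)) := fun b hb =>
    hT_bopt ▸ hT.monotoneOn hbopt.le (hbopt.le.trans hb) hb
  constructor
  · exact ((strictMonoOn_coverageProfile hZ₁.le hZ₂).comp (hT.mono fun b hb => hb.1.le)
      hT_le).congr (hST.mono Ioc_subset_Ioi_self)
  · exact ((strictAntiOn_coverageProfile hZ₁ hZ₂).comp_strictMonoOn
      (hT.mono fun b hb => hbopt.le.trans hb) hT_ge).congr
      (hST.mono fun b hb => hbopt.trans_le hb)
end

section
/- At the optimal bias b_opt = (1/P̂)(Z₁/(aZ₂))^{α/2}, the offload fraction A₂ = a/(a + (1/(P̂ b_opt))^{2/α}) equals Z₁/(Z₁ + Z₂), independent of the density ratio a and power ratio P̂. -/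
open Real

lemma Real.one_div_rpow_rpow_inv {x y : ℝ} (hx : 0 ≤ x) (hy : y ≠ 0) :
    (1 / x ^ y) ^ y⁻¹ = 1 / x := by
  rw [one_div, one_div, inv_rpow (rpow_nonneg hx y), rpow_rpow_inv hx hy]

/-- At `b_opt = (1/P̂)(Z₁/(aZ₂))^{α/2}`, the offload fraction
`A₂ = a/(a + (1/(P̂ b_opt))^{2/α})` equals `Z₁/(Z₁+Z₂)`. -/
theorem optimal_offload_fraction (α a Phat Z₁ Z₂ : ℝ)
    (hα : 2 < α) (ha : 0 < a) (hP : 0 < Phat) (hZ₁ : 0 < Z₁) (hZ₂ : 0 < Z₂) :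
    let bopt := (1 / Phat) * (Z₁ / (a * Z₂)) ^ (α / 2)
    a / (a + (1 / (Phat * bopt)) ^ (2 / α)) = Z₁ / (Z₁ + Z₂) := by
  intro bopt
  have hPb : Phat * bopt = (Z₁ / (a * Z₂)) ^ (α / 2) := by
    simp only [bopt, ← mul_assoc, mul_one_div_cancel hP.ne', one_mul]
  have hPb_rpow : (1 / (Phat * bopt)) ^ (2 / α) = a * Z₂ / Z₁ := by
    rw [hPb, ← inv_div α 2, one_div_rpow_rpow_inv (by positivity) (by positivity), one_div_div]
  rw [hPb_rpow]
  field_simp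
end
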